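/- arXiv:2205.08353 — 13 statements merged into one kernel-verified Lean document; each statement's English description precedes it below -/
import Mathlib

section
/- The FM-quarrel rule is supremely non-monotonic: for every k there exist n, a monotonic binary voting game G on [n], and distinct players i, j such that the game obtained by imposing an FM-quarrel between i and j is not k-monotonic. Concretely, for the game with W = {S ⊆ [n] : S ≠ ∅} and n ≥ k+2, the FM-quarrel game is not k-monotonic. -/
/-- A game `W` is `k`-monotonic. -/
def kMonotonic {n : ℕ} (W : Finset (Fin n) → Prop) (k : ℕ) : Prop :=
  ∀ S : Finset (Fin n), ¬ W S → ∀ T, T ⊂ S →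
    ∃ K : Finset (Fin n), K.card ≤ k ∧ ¬ W (T \ K)

/-- The FM-quarrel between `i` and `j` imposed on `W`:
`S` is winning iff `{i,j} ⊄ S` and `S ∈ W`. -/
def FMquarrel {n : ℕ} (W : Finset (Fin n) → Prop) (i j : Fin n)
    (S : Finset (Fin n)) : Prop :=
  W S ∧ ¬ (i ∈ S ∧ j ∈ S)

/-- The FM-rule is supremely non-monotonic: for every `k`, imposing an FM-quarrel on
the monotonic game `W = {S : S ≠ ∅}` (with `n ≥ k+2`) yields a non-`k`-monotonic game. -/
theorem FM_supremely_nonmonotonic (k n : ℕ) (hn : k + 2 ≤ n) (i j : Fin n) (hij : i ≠ j) :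
    ¬ kMonotonic (FMquarrel (fun S : Finset (Fin n) => S ≠ ∅) i j) k := by
  intro h
  obtain ⟨K, hK, hbad⟩ := h Finset.univ
    (by simp [FMquarrel]) (Finset.univ.erase j)
    (Finset.erase_ssubset (Finset.mem_univ j))
  apply hbad
  constructor
  · -- nonempty: card ≥ (n-1) - k ≥ 1
    intro hempty
    have hcard : (Finset.univ.erase j \ K).card = 0 := by simp [hempty]
    have h1 : (Finset.univ.erase j).card = n - 1 := by
      simp [Finset.card_erase_of_mem]
    have h2 : (Finset.univ.erase j).card - K.card ≤ (Finset.univ.erase j \ K).card :=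
      Finset.le_card_sdiff _ _
    omega
  · rintro ⟨-, hj⟩
    exact (Finset.mem_erase.mp (Finset.mem_sdiff.mp hj).1).1 rfl
end

section
/- The LV-quarrel rule is supremely non-monotonic: for every k there exist n, a monotonic binary voting game G on [n], and players i ≠ j such that the LV-quarrel game of i against j is not k-monotonic. Concretely, for the dictator game with W = {S ⊆ [n] : i ∈ S}, with n ≥ k+1, the LV-quarrel game is not k-monotonic. -/
/-- The LV-quarrel of `i` against `j`: if `j ∈ S` then `S` is winning iff `S \ {i} ∈ W`;
if `j ∉ S` then `S` is winning iff `S ∪ {i} ∈ W`. -/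
def LVquarrel {n : ℕ} (W : Finset (Fin n) → Prop) (i j : Fin n)
    (S : Finset (Fin n)) : Prop :=
  if j ∈ S then W (S.erase i) else W (insert i S)

/-- The LV-rule is supremely non-monotonic: for every `k`, imposing the LV-quarrel of `i`
against `j` on the dictator game `W = {S : i ∈ S}` (with `n ≥ k+1`) yields a
non-`k`-monotonic game. -/
theorem LV_supremely_nonmonotonic (k n : ℕ) (hn : k + 1 ≤ n) (i j : Fin n) (hij : i ≠ j) :
    ¬ kMonotonic (LVquarrel (fun S : Finset (Fin n) => i ∈ S) i j) k := by
  intro h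
  have hS : ¬ LVquarrel (fun S : Finset (Fin n) => i ∈ S) i j {i, j} := by
    simp [LVquarrel, hij.symm]
  obtain ⟨K, -, hW⟩ := h {i, j} hS {i} ⟨by simp, by
    intro hsub
    have := hsub (by simp : j ∈ ({i, j} : Finset (Fin n)))
    simp [hij.symm] at this⟩
  exact hW (by simp [LVquarrel, hij, Ne.symm hij])
end

section
/- A game derived from a monotonic binary voting game by imposing a reciprocal weak YES-quarrel between players i and j is monotonic. -/
/-- A game derived from a monotonic game by a reciprocal weak YES-quarrel between
`i` and `j` is monotonic. -/
theorem recWeakYesQuarrel_monotonic (n : ℕ) (W Wh : Finset (Fin n) → Prop)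
    (i j : Fin n) (hij : i ≠ j)
    (hmono : ∀ T S : Finset (Fin n), T ⊆ S → W T → W S)
    (ha : ∀ S : Finset (Fin n), i ∉ S → j ∉ S →
      (Wh (insert i (insert j S)) ↔ (W (insert i S) ∨ W (insert j S))))
    (hb : ∀ S : Finset (Fin n), i ∉ S → j ∉ S → (Wh (insert i S) ↔ W (insert i S)))
    (hc : ∀ S : Finset (Fin n), i ∉ S → j ∉ S → (Wh (insert j S) ↔ W (insert j S)))
    (hd : ∀ S : Finset (Fin n), i ∉ S → j ∉ S → (Wh S ↔ W S)) :
    ∀ T S : Finset (Fin n), T ⊆ S → Wh T → Wh S := by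
  -- characterization when both i and j are in S
  have L1 : ∀ S : Finset (Fin n), i ∈ S → j ∈ S →
      (Wh S ↔ (W (S.erase j) ∨ W (S.erase i))) := by
    intro S hi hj
    set S0 := (S.erase i).erase j with hS0
    have hiS0 : i ∉ S0 := fun h => (Finset.mem_erase.mp ((Finset.mem_erase.mp h).2)).1 rfl
    have hjS0 : j ∉ S0 := fun h => (Finset.mem_erase.mp h).1 rfl
    have hjSi : j ∈ S.erase i := Finset.mem_erase.mpr ⟨hij.symm, hj⟩
    have e1 : insert j S0 = S.erase i := Finset.insert_erase hjSi
    have e2 : insert i (insert j S0) = S := by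
      rw [e1]; exact Finset.insert_erase hi
    have e3 : insert i S0 = S.erase j := by
      rw [hS0, Finset.erase_right_comm]
      exact Finset.insert_erase (Finset.mem_erase.mpr ⟨hij, hi⟩)
    have := ha S0 hiS0 hjS0
    rw [e2, e3, e1] at this
    exact this
  -- characterization when not both
  have L2 : ∀ S : Finset (Fin n), ¬(i ∈ S ∧ j ∈ S) → (Wh S ↔ W S) := by
    intro S hnb
    by_cases hi : i ∈ S
    · have hj : j ∉ S := fun hj => hnb ⟨hi, hj⟩
      have hiS := Finset.notMem_erase i S
      have hjS : j ∉ S.erase i := fun h => hj (Finset.mem_of_mem_erase h)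
      have := hb (S.erase i) hiS hjS
      rwa [Finset.insert_erase hi] at this
    · by_cases hj : j ∈ S
      · have hjS := Finset.notMem_erase j S
        have hiS : i ∉ S.erase j := fun h => hi (Finset.mem_of_mem_erase h)
        have := hc (S.erase j) hiS hjS
        rwa [Finset.insert_erase hj] at this
      · exact hd S hi hj
  intro T S hTS hT
  by_cases hSb : i ∈ S ∧ j ∈ S
  · rw [L1 S hSb.1 hSb.2]
    by_cases hiT : i ∈ T <;> by_cases hjT : j ∈ T
    · have := (L1 T hiT hjT).mp hT
      rcases this with h | h
      · exact Or.inl (hmono _ _ (Finset.erase_subset_erase j hTS) h)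
      · exact Or.inr (hmono _ _ (Finset.erase_subset_erase i hTS) h)
    · have hw : W T := (L2 T (fun h => hjT h.2)).mp hT
      exact Or.inl (hmono _ _ (Finset.subset_erase.mpr ⟨hTS, hjT⟩) hw)
    · have hw : W T := (L2 T (fun h => hiT h.1)).mp hT
      exact Or.inr (hmono _ _ (Finset.subset_erase.mpr ⟨hTS, hiT⟩) hw)
    · have hw : W T := (L2 T (fun h => hiT h.1)).mp hT
      exact Or.inl (hmono _ _ (Finset.subset_erase.mpr ⟨hTS, hjT⟩) hw)
  · have hTnb : ¬(i ∈ T ∧ j ∈ T) := fun h => hSb ⟨hTS h.1, hTS h.2⟩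
    exact (L2 S hSb).mpr (hmono _ _ hTS ((L2 T hTnb).mp hT))
end

section
/- A game derived from a monotonic binary voting game by imposing a reciprocal strong YES-quarrel between players i and j is quasi-monotonic (1-monotonic). -/
/-- A game derived from a monotonic game by a reciprocal strong YES-quarrel between
`i` and `j` is quasi-monotonic (1-monotonic). -/
theorem recStrongYesQuarrel_quasiMonotonic (n : ℕ) (W Wh : Finset (Fin n) → Prop)
    (i j : Fin n) (hij : i ≠ j)
    (hmono : ∀ T S : Finset (Fin n), T ⊆ S → W T → W S)
    (ha : ∀ S : Finset (Fin n), i ∉ S → j ∉ S → (Wh (insert i (insert j S)) ↔ W S))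
    (hb : ∀ S : Finset (Fin n), i ∉ S → j ∉ S → (Wh (insert i S) ↔ W (insert i S)))
    (hc : ∀ S : Finset (Fin n), i ∉ S → j ∉ S → (Wh (insert j S) ↔ W (insert j S)))
    (hd : ∀ S : Finset (Fin n), i ∉ S → j ∉ S → (Wh S ↔ W S)) :
    kMonotonic Wh 1 := by
  intro S hS T hT
  have hTS : T ⊆ S := hT.subset
  -- Wh agrees with W on sets not containing both i and j
  have key : ∀ U : Finset (Fin n), ¬(i ∈ U ∧ j ∈ U) → (Wh U ↔ W U) := by
    intro U hU
    by_cases hi : i ∈ U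
    · have hj : j ∉ U := fun hj => hU ⟨hi, hj⟩
      have h := hb (U.erase i) (Finset.notMem_erase i U)
        (fun h => hj (Finset.mem_of_mem_erase h))
      rwa [Finset.insert_erase hi] at h
    · by_cases hj : j ∈ U
      · have h := hc (U.erase j) (fun h => hi (Finset.mem_of_mem_erase h))
          (Finset.notMem_erase j U)
        rwa [Finset.insert_erase hj] at h
      · exact hd U hi hj
  have keyBoth : ∀ U : Finset (Fin n), i ∈ U → j ∈ U →
      (Wh U ↔ W ((U.erase i).erase j)) := by
    intro U hi hj
    have hji : j ∈ U.erase i := Finset.mem_erase.mpr ⟨fun h => hij h.symm, hj⟩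
    have hni : i ∉ (U.erase i).erase j := fun h =>
      Finset.notMem_erase i U (Finset.mem_of_mem_erase h)
    have h := ha ((U.erase i).erase j) hni (Finset.notMem_erase j _)
    rwa [Finset.insert_erase hji, Finset.insert_erase hi] at h
  by_cases hti : i ∈ T
  · by_cases htj : j ∈ T
    · -- both in T, hence both in S
      have hnW : ¬ W ((S.erase i).erase j) := fun h =>
        hS ((keyBoth S (hTS hti) (hTS htj)).mpr h)
      have hsub : (T.erase i).erase j ⊆ (S.erase i).erase j :=
        Finset.erase_subset_erase j (Finset.erase_subset_erase i hTS)
      refine ⟨∅, by simp, ?_⟩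
      rw [Finset.sdiff_empty]
      exact fun h => hnW (hmono _ _ hsub ((keyBoth T hti htj).mp h))
    · by_cases hsj : j ∈ S
      · -- i ∈ T, j ∉ T, both i,j ∈ S : remove i from T
        have hnW : ¬ W ((S.erase i).erase j) := fun h =>
          hS ((keyBoth S (hTS hti) hsj).mpr h)
        have hsub : T.erase i ⊆ (S.erase i).erase j := by
          intro x hx
          rcases Finset.mem_erase.mp hx with ⟨hxi, hxT⟩
          exact Finset.mem_erase.mpr ⟨fun h => htj (h ▸ hxT),
            Finset.mem_erase.mpr ⟨hxi, hTS hxT⟩⟩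
        refine ⟨{i}, by simp, ?_⟩
        rw [← Finset.erase_eq]
        have hnb : ¬(i ∈ T.erase i ∧ j ∈ T.erase i) := fun h =>
          Finset.notMem_erase i T h.1
        exact fun h => hnW (hmono _ _ hsub ((key _ hnb).mp h))
      · -- j ∉ S : Wh S ↔ W S, so ¬ W S, hence ¬ W T
        have hnW : ¬ W S := fun h => hS ((key S (fun h' => hsj h'.2)).mpr h)
        refine ⟨∅, by simp, ?_⟩
        rw [Finset.sdiff_empty]
        exact fun h => hnW (hmono _ _ hTS ((key T (fun h' => htj h'.2)).mp h))
  · by_cases htj : j ∈ T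
    · by_cases hsi : i ∈ S
      · have hnW : ¬ W ((S.erase i).erase j) := fun h =>
          hS ((keyBoth S hsi (hTS htj)).mpr h)
        have hsub : T.erase j ⊆ (S.erase i).erase j := by
          intro x hx
          rcases Finset.mem_erase.mp hx with ⟨hxj, hxT⟩
          exact Finset.mem_erase.mpr ⟨hxj,
            Finset.mem_erase.mpr ⟨fun h => hti (h ▸ hxT), hTS hxT⟩⟩
        refine ⟨{j}, by simp, ?_⟩
        rw [← Finset.erase_eq]
        have hnb : ¬(i ∈ T.erase j ∧ j ∈ T.erase j) := fun h =>
          Finset.notMem_erase j T h.2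
        exact fun h => hnW (hmono _ _ hsub ((key _ hnb).mp h))
      · have hnW : ¬ W S := fun h => hS ((key S (fun h' => hsi h'.1)).mpr h)
        refine ⟨∅, by simp, ?_⟩
        rw [Finset.sdiff_empty]
        exact fun h => hnW (hmono _ _ hTS ((key T (fun h' => hti h'.1)).mp h))
    · -- neither i nor j in T
      by_cases hs : i ∈ S ∧ j ∈ S
      · have hnW : ¬ W ((S.erase i).erase j) := fun h =>
          hS ((keyBoth S hs.1 hs.2).mpr h)
        have hsub : T ⊆ (S.erase i).erase j := by
          intro x hx
          exact Finset.mem_erase.mpr ⟨fun h => htj (h ▸ hx),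
            Finset.mem_erase.mpr ⟨fun h => hti (h ▸ hx), hTS hx⟩⟩
        refine ⟨∅, by simp, ?_⟩
        rw [Finset.sdiff_empty]
        exact fun h => hnW (hmono _ _ hsub ((key T (fun h' => hti h'.1)).mp h))
      · have hnW : ¬ W S := fun h => hS ((key S hs).mpr h)
        refine ⟨∅, by simp, ?_⟩
        rw [Finset.sdiff_empty]
        exact fun h => hnW (hmono _ _ hTS ((key T (fun h' => hti h'.1)).mp h))
end

section
/- A game derived from a monotonic binary voting game by imposing a symmetric reciprocal weak quarrel between players i and j is monotonic. -/
/-- A game derived from a monotonic game by a symmetric reciprocal weak quarrel between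
`i` and `j` is monotonic. -/
theorem symRecWeakQuarrel_monotonic (n : ℕ) (W Wh : Finset (Fin n) → Prop)
    (i j : Fin n) (hij : i ≠ j)
    (hmono : ∀ T S : Finset (Fin n), T ⊆ S → W T → W S)
    (ha : ∀ S : Finset (Fin n), i ∉ S → j ∉ S →
      (Wh (insert i (insert j S)) ↔ (W (insert i S) ∨ W (insert j S))))
    (hb : ∀ S : Finset (Fin n), i ∉ S → j ∉ S →
      (Wh S ↔ (W (insert i S) ∧ W (insert j S))))
    (hc : ∀ S : Finset (Fin n), i ∉ S → j ∉ S → (Wh (insert i S) ↔ W (insert i S)))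
    (hd : ∀ S : Finset (Fin n), i ∉ S → j ∉ S → (Wh (insert j S) ↔ W (insert j S))) :
    ∀ T S : Finset (Fin n), T ⊆ S → Wh T → Wh S := by
  classical
  intro T S hTS hT
  set TE := (T.erase i).erase j with hTE
  set SE := (S.erase i).erase j with hSE
  have hiTE : i ∉ TE := by simp [hTE, Finset.mem_erase]
  have hjTE : j ∉ TE := by simp [hTE]
  have hiSE : i ∉ SE := by simp [hSE, Finset.mem_erase]
  have hjSE : j ∉ SE := by simp [hSE]
  have hsub : TE ⊆ SE := Finset.erase_subset_erase _ (Finset.erase_subset_erase _ hTS)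
  by_cases hiT : i ∈ T <;> by_cases hjT : j ∈ T <;>
    by_cases hiS : i ∈ S <;> by_cases hjS : j ∈ S
  all_goals first
    | exact absurd (hTS hiT) hiS
    | exact absurd (hTS hjT) hjS
    | skip
  -- TTTT
  · have hTeq : T = insert i (insert j TE) := by
      rw [hTE, Finset.insert_erase (Finset.mem_erase.mpr ⟨Ne.symm hij, hjT⟩),
        Finset.insert_erase hiT]
    have hSeq : S = insert i (insert j SE) := by
      rw [hSE, Finset.insert_erase (Finset.mem_erase.mpr ⟨Ne.symm hij, hjS⟩),
        Finset.insert_erase hiS]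
    rw [hTeq, ha TE hiTE hjTE] at hT
    rw [hSeq, ha SE hiSE hjSE]
    rcases hT with h | h
    · exact Or.inl (hmono _ _ (Finset.insert_subset_insert _ hsub) h)
    · exact Or.inr (hmono _ _ (Finset.insert_subset_insert _ hsub) h)
  -- TFTT
  · have hTeq : T = insert i TE := by
      rw [hTE, Finset.erase_eq_of_notMem (fun h => hjT (Finset.mem_of_mem_erase h)),
        Finset.insert_erase hiT]
    have hSeq : S = insert i (insert j SE) := by
      rw [hSE, Finset.insert_erase (Finset.mem_erase.mpr ⟨Ne.symm hij, hjS⟩),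
        Finset.insert_erase hiS]
    rw [hTeq, hc TE hiTE hjTE] at hT
    rw [hSeq, ha SE hiSE hjSE]
    exact Or.inl (hmono _ _ (Finset.insert_subset_insert _ hsub) hT)
  -- TFTF
  · have hTeq : T = insert i TE := by
      rw [hTE, Finset.erase_eq_of_notMem (fun h => hjT (Finset.mem_of_mem_erase h)),
        Finset.insert_erase hiT]
    have hSeq : S = insert i SE := by
      rw [hSE, Finset.erase_eq_of_notMem (fun h => hjS (Finset.mem_of_mem_erase h)),
        Finset.insert_erase hiS]
    rw [hTeq, hc TE hiTE hjTE] at hT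
    rw [hSeq, hc SE hiSE hjSE]
    exact hmono _ _ (Finset.insert_subset_insert _ hsub) hT
  -- FTTT
  · have hTeq : T = insert j TE := by
      rw [hTE, Finset.erase_eq_of_notMem hiT, Finset.insert_erase hjT]
    have hSeq : S = insert i (insert j SE) := by
      rw [hSE, Finset.insert_erase (Finset.mem_erase.mpr ⟨Ne.symm hij, hjS⟩),
        Finset.insert_erase hiS]
    rw [hTeq, hd TE hiTE hjTE] at hT
    rw [hSeq, ha SE hiSE hjSE]
    exact Or.inr (hmono _ _ (Finset.insert_subset_insert _ hsub) hT)
  -- FTFT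
  · have hTeq : T = insert j TE := by
      rw [hTE, Finset.erase_eq_of_notMem hiT, Finset.insert_erase hjT]
    have hSeq : S = insert j SE := by
      rw [hSE, Finset.erase_eq_of_notMem hiS, Finset.insert_erase hjS]
    rw [hTeq, hd TE hiTE hjTE] at hT
    rw [hSeq, hd SE hiSE hjSE]
    exact hmono _ _ (Finset.insert_subset_insert _ hsub) hT
  -- FFTT
  · have hSeq : S = insert i (insert j SE) := by
      rw [hSE, Finset.insert_erase (Finset.mem_erase.mpr ⟨Ne.symm hij, hjS⟩),
        Finset.insert_erase hiS]
    have hTsub : T ⊆ SE :=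
      Finset.subset_erase.mpr ⟨Finset.subset_erase.mpr ⟨hTS, hiT⟩, hjT⟩
    rw [hb T hiT hjT] at hT
    rw [hSeq, ha SE hiSE hjSE]
    exact Or.inl (hmono _ _ (Finset.insert_subset_insert _ hTsub) hT.1)
  -- FFTF
  · have hSeq : S = insert i SE := by
      rw [hSE, Finset.erase_eq_of_notMem (fun h => hjS (Finset.mem_of_mem_erase h)),
        Finset.insert_erase hiS]
    have hTsub : T ⊆ SE :=
      Finset.subset_erase.mpr ⟨Finset.subset_erase.mpr ⟨hTS, hiT⟩, hjT⟩
    rw [hb T hiT hjT] at hT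
    rw [hSeq, hc SE hiSE hjSE]
    exact hmono _ _ (Finset.insert_subset_insert _ hTsub) hT.1
  -- FFFT
  · have hSeq : S = insert j SE := by
      rw [hSE, Finset.erase_eq_of_notMem hiS, Finset.insert_erase hjS]
    have hTsub : T ⊆ SE :=
      Finset.subset_erase.mpr ⟨Finset.subset_erase.mpr ⟨hTS, hiT⟩, hjT⟩
    rw [hb T hiT hjT] at hT
    rw [hSeq, hd SE hiSE hjSE]
    exact hmono _ _ (Finset.insert_subset_insert _ hTsub) hT.2
  -- FFFF
  · rw [hb T hiT hjT] at hT
    rw [hb S hiS hjS]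
    exact ⟨hmono _ _ (Finset.insert_subset_insert _ hTS) hT.1,
      hmono _ _ (Finset.insert_subset_insert _ hTS) hT.2⟩
end

section
/- The symmetric reciprocal strong quarrel rule is supremely non-monotonic: for every k, taking n ≥ k+2, the game with W = {S ⊆ [n] : S ∩ {i,j} ≠ ∅} yields, after imposing a symmetric reciprocal strong quarrel between i and j, a game that is not k-monotonic. -/
/-- The symmetric reciprocal strong quarrel between `i` and `j` imposed on `W`. -/
def symRecStrong {n : ℕ} (W : Finset (Fin n) → Prop) (i j : Fin n)
    (S : Finset (Fin n)) : Prop :=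
  if i ∈ S ∧ j ∈ S then W (S \ {i, j})
  else if i ∉ S ∧ j ∉ S then W (S ∪ {i, j})
  else W S

lemma quarrel_char {n : ℕ} (i j : Fin n) (S : Finset (Fin n)) :
    symRecStrong (fun S : Finset (Fin n) => S ∩ {i, j} ≠ ∅) i j S ↔ ¬ (i ∈ S ∧ j ∈ S) := by
  unfold symRecStrong
  by_cases h : i ∈ S ∧ j ∈ S
  · simp only [h, if_true]
    constructor
    · intro hW _
      apply hW
      ext x
      simp only [Finset.mem_inter, Finset.mem_sdiff, Finset.mem_insert,
        Finset.mem_singleton, Finset.notMem_empty, iff_false]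
      tauto
    · tauto
  · simp only [h, if_false, iff_true, not_false_iff]
    by_cases h2 : i ∉ S ∧ j ∉ S
    · simp only [h2, if_true]
      intro hemp
      have : i ∈ (∅ : Finset (Fin n)) := by
        rw [← hemp]
        simp
      simp at this
    · simp only [h2, if_false]
      intro hemp
      rcases not_and_or.mp h2 with hi | hj
      · have : i ∈ (∅ : Finset (Fin n)) := by
          rw [← hemp]; simp [not_not.mp hi]
        simp at this
      · have : j ∈ (∅ : Finset (Fin n)) := by
          rw [← hemp]; simp [not_not.mp hj]
        simp at this

/-- The symmetric reciprocal strong quarrel rule is supremely non-monotonic: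
for every `k`, with `n ≥ k+2`, imposing it on the monotonic game
`W = {S : S ∩ {i,j} ≠ ∅}` yields a non-`k`-monotonic game. -/
theorem symRecStrong_supremely_nonmonotonic (k n : ℕ) (hn : k + 2 ≤ n)
    (i j : Fin n) (hij : i ≠ j) :
    ¬ kMonotonic (symRecStrong (fun S : Finset (Fin n) => S ∩ {i, j} ≠ ∅) i j) k := by
  intro h
  have hS : ¬ symRecStrong (fun S : Finset (Fin n) => S ∩ {i, j} ≠ ∅) i j Finset.univ := by
    rw [quarrel_char]; simp
  obtain ⟨K, _, hK⟩ := h Finset.univ hS (Finset.univ \ {i})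
    (Finset.sdiff_ssubset (by simp) (by simp))
  apply hK
  rw [quarrel_char]
  intro ⟨hi, _⟩
  simp at hi
end

section
/- The symmetric reciprocal cataclysmic quarrel rule is supremely non-monotonic: for every k, taking n ≥ k+2, the game with W = {S ⊆ [n] : S ≠ ∅} yields, after imposing a symmetric reciprocal cataclysmic quarrel between i and j, a game that is not k-monotonic. -/
/-- The symmetric reciprocal cataclysmic quarrel between `i` and `j` imposed on `W`. -/
def symRecCataclysmic {n : ℕ} (W : Finset (Fin n) → Prop) (i j : Fin n)
    (S : Finset (Fin n)) : Prop :=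
  if i ∈ S ∧ j ∈ S then W ∅
  else if i ∉ S ∧ j ∉ S then W Finset.univ
  else W S

/-- The symmetric reciprocal cataclysmic quarrel rule is supremely non-monotonic:
for every `k`, with `n ≥ k+2`, imposing it on the monotonic game `W = {S : S ≠ ∅}`
yields a non-`k`-monotonic game. -/
theorem symRecCataclysmic_supremely_nonmonotonic (k n : ℕ) (hn : k + 2 ≤ n)
    (i j : Fin n) (hij : i ≠ j) :
    ¬ kMonotonic (symRecCataclysmic (fun S : Finset (Fin n) => S ≠ ∅) i j) k := by
  have hn' : 0 < n := by omega
  intro h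
  have huniv : ¬ symRecCataclysmic (fun S : Finset (Fin n) => S ≠ ∅) i j Finset.univ := by
    simp [symRecCataclysmic]
  obtain ⟨K, _, hK⟩ := h Finset.univ huniv ∅ (by
    refine Finset.ssubset_univ_iff.mpr ?_
    intro he
    have : i ∈ (Finset.univ : Finset (Fin n)) := Finset.mem_univ i
    rw [← he] at this
    exact absurd this (Finset.notMem_empty i))
  apply hK
  have : (∅ : Finset (Fin n)) \ K = ∅ := Finset.empty_sdiff K
  rw [this]
  have hne : Nonempty (Fin n) := ⟨⟨0, hn'⟩⟩
  simp [symRecCataclysmic]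
  exact Finset.univ_nonempty.ne_empty
end

section
/- A game derived from a monotonic binary voting game by imposing an asymmetric non-reciprocal strong YES-quarrel of player i against player j is quasi-monotonic (1-monotonic). -/
/-- A game derived from a monotonic game by an asymmetric non-reciprocal strong
YES-quarrel of `i` against `j` is quasi-monotonic (1-monotonic). -/
theorem asymNonRecStrongYesQuarrel_quasiMonotonic (n : ℕ) (W Wh : Finset (Fin n) → Prop)
    (i j : Fin n) (hij : i ≠ j)
    (hmono : ∀ T S : Finset (Fin n), T ⊆ S → W T → W S)
    (ha : ∀ S : Finset (Fin n), i ∉ S → j ∉ S →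
      (Wh (insert i (insert j S)) ↔ W (insert j S)))
    (hb : ∀ S : Finset (Fin n), i ∉ S → j ∉ S → (Wh (insert i S) ↔ W (insert i S)))
    (hc : ∀ S : Finset (Fin n), i ∉ S → j ∉ S → (Wh (insert j S) ↔ W (insert j S)))
    (hd : ∀ S : Finset (Fin n), i ∉ S → j ∉ S → (Wh S ↔ W S)) :
    kMonotonic Wh 1 := by
  have key : ∀ T : Finset (Fin n),
      Wh T ↔ W (if i ∈ T ∧ j ∈ T then T.erase i else T) := by
    intro T
    set S0 := T \ {i, j} with hS0
    have hiS0 : i ∉ S0 := by simp [hS0]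
    have hjS0 : j ∉ S0 := by simp [hS0]
    by_cases hi : i ∈ T <;> by_cases hj : j ∈ T
    · have hT : T = insert i (insert j S0) := by
        ext x
        simp only [hS0, Finset.mem_insert, Finset.mem_sdiff, Finset.mem_singleton]
        constructor
        · intro hx
          by_cases h1 : x = i
          · exact Or.inl h1
          by_cases h2 : x = j
          · exact Or.inr (Or.inl h2)
          · exact Or.inr (Or.inr ⟨hx, by simp [h1, h2]⟩)
        · rintro (rfl | rfl | ⟨hx, _⟩) <;> assumption
      have hnot : i ∉ insert j S0 := by
        simp [Finset.mem_insert, hij, hiS0]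
      have herase : T.erase i = insert j S0 := by
        rw [hT, Finset.erase_insert hnot]
      rw [if_pos ⟨hi, hj⟩, herase, hT]
      exact ha S0 hiS0 hjS0
    · have hT : T = insert i S0 := by
        ext x
        simp only [hS0, Finset.mem_insert, Finset.mem_sdiff, Finset.mem_singleton]
        constructor
        · intro hx
          by_cases h1 : x = i
          · exact Or.inl h1
          · exact Or.inr ⟨hx, by simp [h1]; rintro rfl; exact hj hx⟩
        · rintro (rfl | ⟨hx, _⟩) <;> assumption
      rw [if_neg (by tauto)]
      rw [hT]; exact hb S0 hiS0 hjS0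
    · have hT : T = insert j S0 := by
        ext x
        simp only [hS0, Finset.mem_insert, Finset.mem_sdiff, Finset.mem_singleton]
        constructor
        · intro hx
          by_cases h2 : x = j
          · exact Or.inl h2
          · exact Or.inr ⟨hx, by simp [h2]; rintro rfl; exact hi hx⟩
        · rintro (rfl | ⟨hx, _⟩) <;> assumption
      rw [if_neg (by tauto)]
      rw [hT]; exact hc S0 hiS0 hjS0
    · have hT : S0 = T := by
        ext x
        simp only [hS0, Finset.mem_sdiff, Finset.mem_insert, Finset.mem_singleton]
        constructor
        · rintro ⟨hx, _⟩; exact hx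
        · intro hx
          refine ⟨hx, ?_⟩
          rintro (rfl | rfl)
          exacts [hi hx, hj hx]
      rw [if_neg (by tauto)]
      have := hd S0 hiS0 hjS0
      rwa [hT] at this
  intro S hS T hTS
  refine ⟨{i}, by simp, ?_⟩
  have hTi : T \ {i} = T.erase i := by simp [Finset.sdiff_singleton_eq_erase]
  rw [hTi, key]
  have hcond : ¬ (i ∈ T.erase i ∧ j ∈ T.erase i) := by
    simp [Finset.mem_erase]
  rw [if_neg hcond]
  rw [key] at hS
  intro hW
  apply hS
  by_cases hcS : i ∈ S ∧ j ∈ S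
  · rw [if_pos hcS]
    exact hmono _ _ (Finset.erase_subset_erase i hTS.subset) hW
  · rw [if_neg hcS]
    exact hmono _ _ ((Finset.erase_subset i T).trans hTS.subset) hW
end

section
/- The asymmetric non-reciprocal cataclysmic YES-quarrel rule is supremely non-monotonic: for every k, taking n ≥ k+3, the game with W = {S ⊆ [n] : S ⊄ {j}} (i.e., S winning iff S is not a subset of {j}) yields, after imposing an asymmetric non-reciprocal cataclysmic YES-quarrel of i against j, a game that is not k-monotonic. -/
/-- The asymmetric non-reciprocal cataclysmic YES-quarrel of `i` against `j` imposed on `W`: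
only divisions in which both `i` and `j` vote YES are affected. -/
def asymNonRecCataclysmic {n : ℕ} (W : Finset (Fin n) → Prop) (i j : Fin n)
    (S : Finset (Fin n)) : Prop :=
  if i ∈ S ∧ j ∈ S then W {j} else W S

/-- The asymmetric non-reciprocal cataclysmic YES-quarrel rule is supremely non-monotonic:
for every `k`, with `n ≥ k+3`, imposing it on the monotonic game
`W = {S : ¬ S ⊆ {j}}` yields a non-`k`-monotonic game. -/
theorem asymNonRecCataclysmic_supremely_nonmonotonic (k n : ℕ) (hn : k + 3 ≤ n)
    (i j : Fin n) (hij : i ≠ j) :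
    ¬ kMonotonic (asymNonRecCataclysmic (fun S : Finset (Fin n) => ¬ S ⊆ {j}) i j) k := by
  intro h
  have hS : ¬ asymNonRecCataclysmic (fun S : Finset (Fin n) => ¬ S ⊆ {j}) i j Finset.univ := by
    simp [asymNonRecCataclysmic]
  have hT : (Finset.univ \ {i} : Finset (Fin n)) ⊂ Finset.univ :=
    Finset.sdiff_ssubset (Finset.subset_univ _) (by simp)
  obtain ⟨K, hK, hW⟩ := h Finset.univ hS (Finset.univ \ {i}) hT
  apply hW
  have hi : i ∉ (Finset.univ \ {i} : Finset (Fin n)) \ K := by simp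
  have hcard : 2 ≤ (((Finset.univ \ {i} : Finset (Fin n)) \ K)).card := by
    have h1 : (Finset.univ \ {i} : Finset (Fin n)).card = n - 1 := by
      simp [Finset.card_sdiff, Finset.card_univ]
    have h2 : (Finset.univ \ {i} : Finset (Fin n)).card - K.card
        ≤ (((Finset.univ \ {i} : Finset (Fin n)) \ K)).card :=
      Finset.le_card_sdiff K _
    omega
  simp only [asymNonRecCataclysmic]
  rw [if_neg (by tauto)]
  intro hsub
  have := Finset.card_le_card hsub
  simp at this
  omega
end

section
/- The symmetric non-reciprocal cataclysmic quarrel rule is supremely non-monotonic: for every k, taking n ≥ k+3, the game with W = {S ⊆ [n] : |S| ≥ n−1} yields, after imposing a symmetric non-reciprocal cataclysmic quarrel of i against j, a game that is not k-monotonic. -/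
/-- The symmetric non-reciprocal cataclysmic quarrel of `i` against `j` imposed on `W`. -/
def symNonRecCataclysmic {n : ℕ} (W : Finset (Fin n) → Prop) (i j : Fin n)
    (S : Finset (Fin n)) : Prop :=
  if i ∈ S ∧ j ∈ S then W {j}
  else if i ∉ S ∧ j ∉ S then W (Finset.univ \ {j})
  else W S

/-- The symmetric non-reciprocal cataclysmic quarrel rule is supremely non-monotonic:
for every `k`, with `n ≥ k+3`, imposing it on the monotonic game
`W = {S : |S| ≥ n-1}` yields a non-`k`-monotonic game. -/
theorem symNonRecCataclysmic_supremely_nonmonotonic (k n : ℕ) (hn : k + 3 ≤ n)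
    (i j : Fin n) (hij : i ≠ j) :
    ¬ kMonotonic (symNonRecCataclysmic (fun S : Finset (Fin n) => n - 1 ≤ S.card) i j) k := by
  intro h
  have hSnw : ¬ symNonRecCataclysmic (fun S : Finset (Fin n) => n - 1 ≤ S.card) i j
      Finset.univ := by
    simp only [symNonRecCataclysmic, Finset.mem_univ, and_self, if_true]
    simp only [Finset.card_singleton, not_le]
    omega
  have hsub : (Finset.univ \ {i, j} : Finset (Fin n)) ⊂ Finset.univ := by
    refine Finset.ssubset_univ_iff.mpr ?_
    intro hcon
    have : i ∈ (Finset.univ \ ({i, j} : Finset (Fin n))) := by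
      rw [hcon]; exact Finset.mem_univ i
    simp at this
  obtain ⟨K, hK, hnw⟩ := h Finset.univ hSnw (Finset.univ \ {i, j}) hsub
  apply hnw
  have hi : i ∉ (Finset.univ \ ({i, j} : Finset (Fin n))) \ K := by simp
  have hj : j ∉ (Finset.univ \ ({i, j} : Finset (Fin n))) \ K := by simp
  simp only [symNonRecCataclysmic, hi, hj, not_false_iff, and_self, if_true]
  rw [if_neg (by simp [hi])]
  have : (Finset.univ \ ({j} : Finset (Fin n))).card = n - 1 := by
    rw [Finset.card_sdiff_of_subset (by simp)]
    simp
  omega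
end

section
/- In a symmetric reciprocal weak quarrel game, if player i is YES-decisive for a coalition S containing i in the derived game Ĝ, then i is YES-decisive for S in the original game G. Precisely: if S ∈ Ŵ and S \ {i} ∉ Ŵ, then S ∈ W and S \ {i} ∉ W. -/
/-- In a symmetric reciprocal weak quarrel game, if `i` is YES-decisive for a
coalition `S` containing `i` in the derived game, then `i` is YES-decisive for `S`
in the original game. -/
theorem symRecWeakQuarrel_decisive_transfer (n : ℕ) (W Wh : Finset (Fin n) → Prop)
    (i j : Fin n) (hij : i ≠ j)
    (hmono : ∀ T S : Finset (Fin n), T ⊆ S → W T → W S)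
    (ha : ∀ S : Finset (Fin n), i ∉ S → j ∉ S →
      (Wh (insert i (insert j S)) ↔ (W (insert i S) ∨ W (insert j S))))
    (hb : ∀ S : Finset (Fin n), i ∉ S → j ∉ S →
      (Wh S ↔ (W (insert i S) ∧ W (insert j S))))
    (hc : ∀ S : Finset (Fin n), i ∉ S → j ∉ S → (Wh (insert i S) ↔ W (insert i S)))
    (hd : ∀ S : Finset (Fin n), i ∉ S → j ∉ S → (Wh (insert j S) ↔ W (insert j S))) :
    ∀ S : Finset (Fin n), i ∈ S → Wh S → ¬ Wh (S.erase i) →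
      W S ∧ ¬ W (S.erase i) := by
  intro S hiS hWhS hWhE
  by_cases hjS : j ∈ S
  · -- j ∈ S
    set T := (S.erase i).erase j with hT
    have hiT : i ∉ T := fun h => (Finset.mem_erase.mp (Finset.mem_erase.mp h).2).1 rfl
    have hjT : j ∉ T := fun h => (Finset.mem_erase.mp h).1 rfl
    have hSerase : S.erase i = insert j T := by
      rw [hT, Finset.insert_erase (Finset.mem_erase.mpr ⟨Ne.symm hij, hjS⟩)]
    have hS : S = insert i (insert j T) := by
      rw [← hSerase, Finset.insert_erase hiS]
    have hWj : ¬ W (insert j T) := by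
      intro h
      exact hWhE (by rw [hSerase]; exact (hd T hiT hjT).mpr h)
    have hWi : W (insert i T) := by
      have := (ha T hiT hjT).mp (by rwa [← hS])
      tauto
    have hsub : insert i T ⊆ S := by
      intro x hx
      rcases Finset.mem_insert.mp hx with h | h
      · exact h ▸ hiS
      · exact Finset.mem_of_mem_erase (Finset.mem_of_mem_erase h)
    exact ⟨hmono _ _ hsub hWi, by rw [hSerase]; exact hWj⟩
  · -- j ∉ S
    set T := S.erase i with hT
    have hiT : i ∉ T := Finset.notMem_erase _ _
    have hjT : j ∉ T := fun h => hjS (Finset.mem_of_mem_erase h)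
    have hS : S = insert i T := (Finset.insert_erase hiS).symm
    have hWS : W S := by
      rw [hS]; exact (hc T hiT hjT).mp (by rwa [← hS])
    refine ⟨hWS, fun hWT => hWhE ?_⟩
    exact (hb T hiT hjT).mpr ⟨hmono _ _ (Finset.subset_insert _ _) hWT,
      hmono _ _ (Finset.subset_insert _ _) hWT⟩
end

section
/- The Shapley-Shubik index satisfies the quarrel postulate for symmetric reciprocal weak quarrels: if Ĝ is derived from a monotonic binary voting game G by imposing a symmetric reciprocal weak quarrel between players i and j, then the Shapley-Shubik power of i in Ĝ is at most its Shapley-Shubik power in G (and likewise for j). -/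
/-- The set of players occurring in the ordering `σ` up to and including player `i`. -/
def upTo {n : ℕ} (σ : Equiv.Perm (Fin n)) (i : Fin n) : Finset (Fin n) :=
  Finset.univ.filter (fun p => σ.symm p ≤ σ.symm i)

/-- Player `i` is pivotal in the ordering `σ` for the game `W`. -/
def pivotal {n : ℕ} (W : Finset (Fin n) → Prop) (i : Fin n)
    (σ : Equiv.Perm (Fin n)) : Prop :=
  W (upTo σ i) ∧ ¬ W ((upTo σ i).erase i)

/-- The Shapley-Shubik power of player `i` in the game `W`. -/
noncomputable def shapleyShubik {n : ℕ} (W : Finset (Fin n) → Prop) (i : Fin n) : ℚ :=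
  (Nat.card {σ : Equiv.Perm (Fin n) // pivotal W i σ} : ℚ) / (n.factorial : ℚ)

lemma piv_imp {n : ℕ} (W Wh : Finset (Fin n) → Prop)
    (i j : Fin n) (hij : i ≠ j)
    (hmono : ∀ T S : Finset (Fin n), T ⊆ S → W T → W S)
    (ha : ∀ S : Finset (Fin n), i ∉ S → j ∉ S →
      (Wh (insert i (insert j S)) ↔ (W (insert i S) ∨ W (insert j S))))
    (hb : ∀ S : Finset (Fin n), i ∉ S → j ∉ S →
      (Wh S ↔ (W (insert i S) ∧ W (insert j S))))
    (hc : ∀ S : Finset (Fin n), i ∉ S → j ∉ S → (Wh (insert i S) ↔ W (insert i S)))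
    (hd : ∀ S : Finset (Fin n), i ∉ S → j ∉ S → (Wh (insert j S) ↔ W (insert j S)))
    (σ : Equiv.Perm (Fin n)) (h : pivotal Wh i σ) : pivotal W i σ := by
  obtain ⟨h1, h2⟩ := h
  set S := upTo σ i with hS
  have hiS : i ∈ S := by simp [hS, upTo]
  by_cases hjS : j ∈ S
  · -- j occurs before i
    set T := (S.erase i).erase j with hT
    have hiT : i ∉ T := fun h => (Finset.mem_erase.mp (Finset.mem_erase.mp h).2).1 rfl
    have hjT : j ∉ T := fun h => (Finset.mem_erase.mp h).1 rfl
    have hjSe : j ∈ S.erase i := Finset.mem_erase.mpr ⟨hij.symm, hjS⟩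
    have e1 : insert j T = S.erase i := Finset.insert_erase hjSe
    have e2 : insert i (insert j T) = S := by rw [e1]; exact Finset.insert_erase hiS
    have hW1 : W (insert i T) ∨ W (insert j T) := (ha T hiT hjT).mp (e2.symm ▸ h1)
    have hW2 : ¬ W (insert j T) := fun hw => h2 (e1 ▸ (hd T hiT hjT).mpr hw)
    have hWi : W (insert i T) := hW1.resolve_right hW2
    have hsub : insert i T ⊆ S := by
      rw [← e2]
      exact Finset.insert_subset_insert _ (Finset.subset_insert _ _)
    exact ⟨hmono _ S hsub hWi, fun hw => hW2 (e1.symm ▸ hw)⟩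
  · -- j occurs after i
    set T := S.erase i with hT
    have hiT : i ∉ T := fun h => (Finset.mem_erase.mp h).1 rfl
    have hjT : j ∉ T := fun h => hjS (Finset.mem_of_mem_erase h)
    have e2 : insert i T = S := Finset.insert_erase hiS
    have hWi : W (insert i T) := (hc T hiT hjT).mp (e2.symm ▸ h1)
    refine ⟨hmono (insert i T) S (e2 ▸ Finset.Subset.refl S) hWi, fun hw => ?_⟩
    exact h2 ((hb T hiT hjT).mpr ⟨hWi, hmono T _ (Finset.subset_insert _ _) hw⟩)

lemma ss_le {n : ℕ} (W Wh : Finset (Fin n) → Prop) (k : Fin n)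
    (h : ∀ σ, pivotal Wh k σ → pivotal W k σ) :
    shapleyShubik Wh k ≤ shapleyShubik W k := by
  unfold shapleyShubik
  have hcard : Nat.card {σ : Equiv.Perm (Fin n) // pivotal Wh k σ} ≤
      Nat.card {σ : Equiv.Perm (Fin n) // pivotal W k σ} := by
    exact Nat.card_le_card_of_injective _ (Subtype.impEmbedding _ _ h).injective
  have hcast : (Nat.card {σ : Equiv.Perm (Fin n) // pivotal Wh k σ} : ℚ) ≤
      (Nat.card {σ : Equiv.Perm (Fin n) // pivotal W k σ} : ℚ) := by exact_mod_cast hcard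
  gcongr

/-- The Shapley-Shubik index satisfies the quarrel postulate based on a symmetric
reciprocal weak quarrel: the power of each quarreller does not increase. -/
theorem shapleyShubik_quarrel_postulate (n : ℕ) (W Wh : Finset (Fin n) → Prop)
    (i j : Fin n) (hij : i ≠ j)
    (hmono : ∀ T S : Finset (Fin n), T ⊆ S → W T → W S)
    (ha : ∀ S : Finset (Fin n), i ∉ S → j ∉ S →
      (Wh (insert i (insert j S)) ↔ (W (insert i S) ∨ W (insert j S))))
    (hb : ∀ S : Finset (Fin n), i ∉ S → j ∉ S →
      (Wh S ↔ (W (insert i S) ∧ W (insert j S))))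
    (hc : ∀ S : Finset (Fin n), i ∉ S → j ∉ S → (Wh (insert i S) ↔ W (insert i S)))
    (hd : ∀ S : Finset (Fin n), i ∉ S → j ∉ S → (Wh (insert j S) ↔ W (insert j S))) :
    shapleyShubik Wh i ≤ shapleyShubik W i ∧ shapleyShubik Wh j ≤ shapleyShubik W j := by
  constructor
  · exact ss_le W Wh i (piv_imp W Wh i j hij hmono ha hb hc hd)
  · refine ss_le W Wh j (piv_imp W Wh j i hij.symm hmono ?_ ?_ (fun S h1 h2 => hd S h2 h1) (fun S h1 h2 => hc S h2 h1))
    · intro S hjS hiS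
      rw [Finset.insert_comm, ha S hiS hjS, or_comm]
    · intro S hjS hiS
      rw [hb S hiS hjS, and_comm]
end

section
/- The Penrose-Banzhaf measure satisfies the quarrel postulate for symmetric reciprocal weak quarrels: if Ĝ is derived from a monotonic binary voting game G by imposing a symmetric reciprocal weak quarrel between players i and j, then the number of coalitions S with i ∈ S for which i is YES-decisive in Ĝ is at most the number of such coalitions for which i is YES-decisive in G (hence the Penrose-Banzhaf power of i does not increase; similarly for j). -/
/-- The number of coalitions containing `p` for which `p` is YES-decisive in `W`. -/
noncomputable def decisiveCount {n : ℕ} (W : Finset (Fin n) → Prop) (p : Fin n) : ℕ :=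
  Nat.card {S : Finset (Fin n) // p ∈ S ∧ W S ∧ ¬ W (S.erase p)}

/-- The Penrose-Banzhaf power of player `p` in the game `W`. -/
noncomputable def penroseBanzhaf {n : ℕ} (W : Finset (Fin n) → Prop) (p : Fin n) : ℚ :=
  (decisiveCount W p : ℚ) / (2 ^ (n - 1) : ℚ)

lemma decisive_imp {n : ℕ} (W Wh : Finset (Fin n) → Prop)
    (i j : Fin n) (hij : i ≠ j)
    (hmono : ∀ T S : Finset (Fin n), T ⊆ S → W T → W S)
    (ha : ∀ S : Finset (Fin n), i ∉ S → j ∉ S →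
      (Wh (insert i (insert j S)) ↔ (W (insert i S) ∨ W (insert j S))))
    (hb : ∀ S : Finset (Fin n), i ∉ S → j ∉ S →
      (Wh S ↔ (W (insert i S) ∧ W (insert j S))))
    (hc : ∀ S : Finset (Fin n), i ∉ S → j ∉ S → (Wh (insert i S) ↔ W (insert i S)))
    (hd : ∀ S : Finset (Fin n), i ∉ S → j ∉ S → (Wh (insert j S) ↔ W (insert j S)))
    (S : Finset (Fin n)) (h : i ∈ S ∧ Wh S ∧ ¬ Wh (S.erase i)) :
    i ∈ S ∧ W S ∧ ¬ W (S.erase i) := by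
  obtain ⟨hiS, hWhS, hWhe⟩ := h
  by_cases hjS : j ∈ S
  · -- S = insert i (insert j T)
    set T := (S.erase i).erase j with hT
    have hiT : i ∉ T := fun h => Finset.notMem_erase i S (Finset.mem_of_mem_erase h)
    have hjT : j ∉ T := Finset.notMem_erase j _
    have hjE : j ∈ S.erase i := Finset.mem_erase.mpr ⟨Ne.symm hij, hjS⟩
    have hEe : insert j T = S.erase i := Finset.insert_erase hjE
    have hSS : insert i (insert j T) = S := by rw [hEe]; exact Finset.insert_erase hiS
    have h1 : W (insert i T) ∨ W (insert j T) := (ha T hiT hjT).mp (hSS ▸ hWhS)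
    have h2 : ¬ W (insert j T) := fun h => hWhe (hEe ▸ (hd T hiT hjT).mpr (hEe ▸ h))
    have h3 : W (insert i T) := h1.resolve_right h2
    refine ⟨hiS, hmono _ _ ?_ h3, hEe ▸ h2⟩
    · rw [← hSS]
      exact Finset.insert_subset_insert _ (Finset.subset_insert _ _)
  · -- S = insert i T, j ∉ T
    set T := S.erase i with hT
    have hiT : i ∉ T := Finset.notMem_erase i S
    have hjT : j ∉ T := fun h => hjS (Finset.mem_of_mem_erase h)
    have hSS : insert i T = S := Finset.insert_erase hiS
    have hWS : W S := hSS ▸ (hc T hiT hjT).mp (hSS ▸ hWhS)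
    have h2 : ¬ (W (insert i T) ∧ W (insert j T)) := fun h => hWhe ((hb T hiT hjT).mpr h)
    have h3 : ¬ W (insert j T) := fun h => h2 ⟨hSS ▸ hWS, h⟩
    exact ⟨hiS, hWS, fun h => h3 (hmono _ _ (Finset.subset_insert _ _) h)⟩

lemma decisiveCount_le {n : ℕ} (W Wh : Finset (Fin n) → Prop) (p : Fin n)
    (h : ∀ S, p ∈ S ∧ Wh S ∧ ¬ Wh (S.erase p) → p ∈ S ∧ W S ∧ ¬ W (S.erase p)) :
    decisiveCount Wh p ≤ decisiveCount W p := by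
  let f : {S : Finset (Fin n) // p ∈ S ∧ Wh S ∧ ¬ Wh (S.erase p)} →
      {S : Finset (Fin n) // p ∈ S ∧ W S ∧ ¬ W (S.erase p)} := fun x => ⟨x.1, h x.1 x.2⟩
  have hf : Function.Injective f := by
    intro a b hab
    have h2 := congrArg Subtype.val hab
    simp only [f] at h2
    exact Subtype.ext h2
  exact Nat.card_le_card_of_injective f hf

/-- The Penrose-Banzhaf measure satisfies the quarrel postulate based on a symmetric
reciprocal weak quarrel: the number of coalitions for which a quarreller is
YES-decisive does not increase, hence its Penrose-Banzhaf power does not increase. -/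
theorem penroseBanzhaf_quarrel_postulate (n : ℕ) (W Wh : Finset (Fin n) → Prop)
    (i j : Fin n) (hij : i ≠ j)
    (hmono : ∀ T S : Finset (Fin n), T ⊆ S → W T → W S)
    (ha : ∀ S : Finset (Fin n), i ∉ S → j ∉ S →
      (Wh (insert i (insert j S)) ↔ (W (insert i S) ∨ W (insert j S))))
    (hb : ∀ S : Finset (Fin n), i ∉ S → j ∉ S →
      (Wh S ↔ (W (insert i S) ∧ W (insert j S))))
    (hc : ∀ S : Finset (Fin n), i ∉ S → j ∉ S → (Wh (insert i S) ↔ W (insert i S)))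
    (hd : ∀ S : Finset (Fin n), i ∉ S → j ∉ S → (Wh (insert j S) ↔ W (insert j S))) :
    (decisiveCount Wh i ≤ decisiveCount W i ∧ decisiveCount Wh j ≤ decisiveCount W j) ∧
    (penroseBanzhaf Wh i ≤ penroseBanzhaf W i ∧ penroseBanzhaf Wh j ≤ penroseBanzhaf W j) := by
  have hi : decisiveCount Wh i ≤ decisiveCount W i :=
    decisiveCount_le W Wh i (decisive_imp W Wh i j hij hmono ha hb hc hd)
  have hj : decisiveCount Wh j ≤ decisiveCount W j := by
    refine decisiveCount_le W Wh j (decisive_imp W Wh j i hij.symm hmono ?_ ?_ (fun S h1 h2 => hd S h2 h1) (fun S h1 h2 => hc S h2 h1))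
    · intro S hjS hiS
      rw [Finset.insert_comm, ha S hiS hjS, or_comm]
    · intro S hjS hiS
      rw [hb S hiS hjS, and_comm]
  refine ⟨⟨hi, hj⟩, ?_, ?_⟩ <;>
    exact div_le_div_of_nonneg_right (by exact_mod_cast ‹_›) (by positivity) |>.trans_eq rfl
end
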